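/- arXiv:0706.1790 — 10 statements merged into one kernel-verified Lean document; each statement's English description precedes it below -/
import Mathlib

section
/- Let n ≥ 1 and let f : ℝ₊ⁿ → ℝ₊ be an index function. If α is an f-optimizing policy function on the nonempty compact subsets of ℝ₊ⁿ such that α(U) is Pareto optimal in U for every nonempty compact U ⊆ ℝ₊ⁿ, then f is monotone, i.e., u ⪯ v implies f(u) ≤ f(v) for all u, v ∈ ℝ₊ⁿ. -/
/-! Apply the policy to the two-point set `{u, v}`: Pareto optimality forces it to pick `v`,
and optimality then gives `f v = max (f u) (f v)`. -/

theorem eq_right_of_mem_pair_of_maximal {β : Type*} [Preorder β] {u v w : β}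
    (hw : w ∈ ({u, v} : Set β)) (huv : u ≤ v) (hmax : w ≤ v → v = w) : w = v := by
  rcases hw with rfl | rfl
  · exact (hmax huv).symm
  · rfl

theorem paretoOptimal_optimizing_implies_monotoneIndex_general
    (n : ℕ) (f : (Fin n → ℝ) → ℝ)
    (α : Set (Fin n → ℝ) → (Fin n → ℝ))
    (hα_pol : ∀ U : Set (Fin n → ℝ), U.Nonempty → IsCompact U →
      U ⊆ {u | ∀ k, 0 ≤ u k} → α U ∈ U)
    (hα_opt : ∀ U : Set (Fin n → ℝ), U.Nonempty → IsCompact U →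
      U ⊆ {u | ∀ k, 0 ≤ u k} → f (α U) = sSup (f '' U))
    (hα_pareto : ∀ U : Set (Fin n → ℝ), U.Nonempty → IsCompact U →
      U ⊆ {u | ∀ k, 0 ≤ u k} → ∀ v ∈ U, (∀ k, α U k ≤ v k) → v = α U) :
    ∀ u v : Fin n → ℝ, (∀ k, 0 ≤ u k) → (∀ k, 0 ≤ v k) →
      (∀ k, u k ≤ v k) → f u ≤ f v := by
  intro u v hu hv huv
  set U : Set (Fin n → ℝ) := {u, v}
  have hne : U.Nonempty := Set.insert_nonempty u {v}
  have hcpt : IsCompact U := (Set.toFinite U).isCompact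
  have hsub : U ⊆ {w | ∀ k, 0 ≤ w k} := Set.insert_subset hu (Set.singleton_subset_iff.2 hv)
  have hαU : α U = v := eq_right_of_mem_pair_of_maximal (hα_pol U hne hcpt hsub) huv
    (hα_pareto U hne hcpt hsub v (Set.mem_insert_of_mem u rfl))
  calc f u ≤ max (f u) (f v) := le_max_left _ _
    _ = sSup (f '' U) := by rw [Set.image_pair, csSup_pair]
    _ = f v := by rw [← hαU, hα_opt U hne hcpt hsub]

/-- If `α` is an `f`-optimizing policy function on the nonempty compact subsets of `ℝ₊ⁿ`
which is Pareto optimal, then the index function `f` is monotone. -/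
theorem paretoOptimal_optimizing_implies_monotoneIndex
    (n : ℕ) (hn : 1 ≤ n) (f : (Fin n → ℝ) → ℝ)
    (hf_nonneg : ∀ u : Fin n → ℝ, (∀ k, 0 ≤ u k) → 0 ≤ f u)
    (α : Set (Fin n → ℝ) → (Fin n → ℝ))
    (hα_pol : ∀ U : Set (Fin n → ℝ), U.Nonempty → IsCompact U →
      U ⊆ {u | ∀ k, 0 ≤ u k} → α U ∈ U)
    (hα_opt : ∀ U : Set (Fin n → ℝ), U.Nonempty → IsCompact U →
      U ⊆ {u | ∀ k, 0 ≤ u k} → f (α U) = sSup (f '' U))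
    (hα_pareto : ∀ U : Set (Fin n → ℝ), U.Nonempty → IsCompact U →
      U ⊆ {u | ∀ k, 0 ≤ u k} → ∀ v ∈ U, (∀ k, α U k ≤ v k) → v = α U) :
    ∀ u v : Fin n → ℝ, (∀ k, 0 ≤ u k) → (∀ k, 0 ≤ v k) →
      (∀ k, u k ≤ v k) → f u ≤ f v :=
  paretoOptimal_optimizing_implies_monotoneIndex_general n f α hα_pol hα_opt hα_pareto
end

section
/- There exists a nonempty compact convex set C ⊆ ℝ₊³ whose Pareto set (the set of points of C that are maximal for the componentwise order ⪯) is not a closed subset of ℝ³. -/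
/-!
The counterexample is the cone with apex `(1,0,1)` over the quarter disk
`{(x,y,0) | x,y ≥ 0, x² + y² ≤ 1}`. Its slice at height `z` is the quarter disk of radius `1 - z`
centred at `(z,0,z)`, so nothing in the cone at positive height dominates a point
`(cos θ, sin θ, 0)` of the circular edge with `0 < θ ≤ π/2`; these points are Pareto maximal.
As `θ → 0` they tend to `(1,0,0)`, which is dominated by the apex.
-/

open Filter Topology Real

lemma setOf_maximal_mem_eq {ι α : Type*} [PartialOrder α] (C : Set (ι → α)) :
    {u | Maximal (· ∈ C) u} = {u ∈ C | ∀ v ∈ C, (∀ k, u k ≤ v k) → v = u} := by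
  ext u
  simp only [maximal_iff, Set.mem_ofPred_eq, Pi.le_def, eq_comm (a := u)]

lemma sq_add_sq_le_sq_of_nonneg_combination {x y t x' y' t' a b : ℝ}
    (ht : 0 ≤ t) (ht' : 0 ≤ t') (h : x ^ 2 + y ^ 2 ≤ t ^ 2) (h' : x' ^ 2 + y' ^ 2 ≤ t' ^ 2)
    (ha : 0 ≤ a) (hb : 0 ≤ b) :
    (a * x + b * x') ^ 2 + (a * y + b * y') ^ 2 ≤ (a * t + b * t') ^ 2 := by
  have cauchySchwarz : (x * x' + y * y') ^ 2 ≤ (t * t') ^ 2 := by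
    nlinarith [sq_nonneg (x * y' - x' * y), mul_le_mul h h' (by positivity) (by positivity)]
  have hinner : x * x' + y * y' ≤ t * t' := (abs_le_of_sq_le_sq' cauchySchwarz (by positivity)).2
  nlinarith [mul_nonneg (mul_nonneg ha hb) (sub_nonneg.2 hinner),
    mul_nonneg (sq_nonneg a) (sub_nonneg.2 h), mul_nonneg (sq_nonneg b) (sub_nonneg.2 h')]

def quarterCone : Set (Fin 3 → ℝ) :=
  {u | 0 ≤ u 2 ∧ u 2 ≤ 1 ∧ 0 ≤ u 1 ∧ u 2 ≤ u 0 ∧ (u 0 - u 2) ^ 2 + u 1 ^ 2 ≤ (1 - u 2) ^ 2}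

namespace quarterCone

lemma isClosed : IsClosed quarterCone := by
  simp only [quarterCone, Set.ofPred_and]
  apply_rules [IsClosed.inter, isClosed_le] <;> fun_prop

lemma subset_Icc : quarterCone ⊆ Set.Icc 0 1 := by
  rintro u ⟨hz, hz1, hy, hzx, hdisk⟩
  refine ⟨fun k => ?_, fun k => ?_⟩ <;> fin_cases k
  all_goals simp only [Fin.zero_eta, Fin.mk_one, Fin.reduceFinMk, Pi.zero_apply, Pi.one_apply]
  all_goals nlinarith

lemma isCompact : IsCompact quarterCone :=
  isCompact_Icc.of_isClosed_subset isClosed subset_Icc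

lemma convex : Convex ℝ quarterCone := by
  rintro u ⟨hu₁, hu₂, hu₃, hu₄, hu₅⟩ v ⟨hv₁, hv₂, hv₃, hv₄, hv₅⟩ a b ha hb hab
  simp only [quarterCone, Set.mem_ofPred_eq, Pi.add_apply, Pi.smul_apply, smul_eq_mul]
  have hx : a * u 0 + b * v 0 - (a * u 2 + b * v 2) = a * (u 0 - u 2) + b * (v 0 - v 2) := by ring
  have ht : 1 - (a * u 2 + b * v 2) = a * (1 - u 2) + b * (1 - v 2) := by
    linear_combination -hab
  refine ⟨by positivity, by nlinarith, by positivity, by nlinarith, ?_⟩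
  rw [hx, ht]
  exact sq_add_sq_le_sq_of_nonneg_combination (by linarith) (by linarith) hu₅ hv₅ ha hb

noncomputable def arc (θ : ℝ) : Fin 3 → ℝ := ![cos θ, sin θ, 0]

lemma arc_mem {θ : ℝ} (hcos : 0 ≤ cos θ) (hsin : 0 ≤ sin θ) : arc θ ∈ quarterCone := by
  simp [quarterCone, arc, hcos, hsin]

lemma maximal_arc {θ : ℝ} (hcos : 0 ≤ cos θ) (hsin : 0 < sin θ) :
    Maximal (· ∈ quarterCone) (arc θ) := by
  refine maximal_iff.2 ⟨arc_mem hcos hsin.le, fun v ⟨hz, _, _, hzx, hdisk⟩ hle => ?_⟩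
  have hx : cos θ ≤ v 0 := hle 0
  have hy : sin θ ≤ v 1 := hle 1
  have hunit := sin_sq_add_cos_sq θ
  have hz0 : v 2 = 0 := by
    by_contra hne
    have hzpos : 0 < v 2 := lt_of_le_of_ne hz (Ne.symm hne)
    have hsy : sin θ ^ 2 ≤ v 1 ^ 2 := pow_le_pow_left₀ hsin.le hy 2
    -- if `v 2 ≤ cos θ` the disk condition forces `cos θ ≥ 1`;
    -- otherwise `sin² θ ≤ (1 - v 2)² < (1 - cos θ)² ≤ sin² θ`
    rcases le_or_gt (v 2) (cos θ) with hzc | hcz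
    · have hcx : (cos θ - v 2) ^ 2 ≤ (v 0 - v 2) ^ 2 :=
        pow_le_pow_left₀ (by linarith) (by linarith) 2
      have hc1 : 1 ≤ cos θ := by nlinarith
      nlinarith
    · have h1z : (1 - v 2) ^ 2 < (1 - cos θ) ^ 2 :=
        pow_lt_pow_left₀ (by linarith) (by linarith) two_ne_zero
      nlinarith
  rw [hz0] at hdisk
  have hx' : v 0 = cos θ := by nlinarith
  have hy' : v 1 = sin θ := by nlinarith
  funext k
  fin_cases k <;> simp [arc, hx', hy', hz0]

lemma not_isClosed_setOf_maximal : ¬ IsClosed {u | Maximal (· ∈ quarterCone) u} := by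
  intro hclosed
  have hlimit : Tendsto arc (𝓝[>] 0) (𝓝 ![1, 0, 0]) := by
    have : Continuous arc := by unfold arc; fun_prop
    simpa [arc] using (this.tendsto 0).mono_left nhdsWithin_le_nhds
  have hmaximal : ∀ᶠ θ in 𝓝[>] 0, Maximal (· ∈ quarterCone) (arc θ) := by
    filter_upwards [Ioo_mem_nhdsGT pi_div_two_pos] with θ ⟨hθ₀, hθ₁⟩
    exact maximal_arc (cos_nonneg_of_mem_Icc ⟨by linarith, hθ₁.le⟩)
      (sin_pos_of_pos_of_lt_pi hθ₀ (by linarith))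
  have hapex : ![(1 : ℝ), 0, 1] ∈ quarterCone := by simp [quarterCone]
  have hdominated : ![(1 : ℝ), 0, 0] ≤ ![1, 0, 1] := by intro k; fin_cases k <;> simp
  have := congrFun ((hclosed.mem_of_tendsto hlimit hmaximal).eq_of_le hapex hdominated) 2
  simp at this

end quarterCone

/-- There exists a nonempty compact convex subset of `ℝ₊³` whose Pareto set
(the set of maximal points for the componentwise order) is not closed. -/
theorem exists_compact_convex_pareto_set_not_closed :
    ∃ C : Set (Fin 3 → ℝ), C.Nonempty ∧ IsCompact C ∧ Convex ℝ C ∧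
      C ⊆ {u | ∀ k, 0 ≤ u k} ∧
      ¬ IsClosed {u ∈ C | ∀ v ∈ C, (∀ k, u k ≤ v k) → v = u} := by
  refine ⟨quarterCone, ⟨_, quarterCone.arc_mem (θ := 0) (by simp) (by simp)⟩,
    quarterCone.isCompact, quarterCone.convex, fun u hu => (quarterCone.subset_Icc hu).1, ?_⟩
  rw [← setOf_maximal_mem_eq]
  exact quarterCone.not_isClosed_setOf_maximal
end

section
/- The map sending a nonempty compact convex subset U of ℝ₊² to the closure of its Pareto set is not continuous for the Hausdorff metric: there exist nonempty compact convex sets Cₙ, C ⊆ ℝ₊² with Cₙ → C in Hausdorff distance, such that the closures of the Pareto sets of the Cₙ do not converge in Hausdorff distance to the closure of the Pareto set of C. -/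
/-!
The trapezoid `trapezoid ε` with vertices `(0,0)`, `(1,0)`, `(1,1)`, `(0,1+ε)` lies within sup-distance `ε`
of the unit square `trapezoid 0`. The Pareto set of the square is its corner `(1,1)` alone, whereas for
`ε > 0` the whole slanted top edge of `trapezoid ε` is Pareto; its endpoint `(0,1+ε)` stays at distance
at least `1` from `(1,1)`.
-/

open Metric Filter

def paretoSet {ι : Type*} (U : Set (ι → ℝ)) : Set (ι → ℝ) :=
  {u ∈ U | ∀ v ∈ U, (∀ k, u k ≤ v k) → v = u}

theorem paretoSet_eq_singleton_of_isGreatest {ι : Type*} {U : Set (ι → ℝ)} {a : ι → ℝ}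
    (ha : IsGreatest U a) : paretoSet U = {a} := by
  ext u
  refine ⟨fun ⟨hu, hmax⟩ => (hmax a ha.1 (ha.2 hu)).symm, ?_⟩
  rintro rfl
  exact ⟨ha.1, fun v hv hle => le_antisymm (ha.2 hv) hle⟩

theorem dist_le_hausdorffDist_singleton {α : Type*} [PseudoMetricSpace α] {s : Set α}
    {x a : α} (hs : Bornology.IsBounded s) (hx : x ∈ s) : dist x a ≤ hausdorffDist s {a} := by
  rw [← infDist_singleton]
  exact infDist_le_hausdorffDist_of_mem hx <|
    hausdorffEDist_ne_top_of_nonempty_of_bounded ⟨x, hx⟩ (Set.singleton_nonempty a) hs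
      Bornology.isBounded_singleton

def trapezoid (ε : ℝ) : Set (Fin 2 → ℝ) :=
  {u | 0 ≤ u 0 ∧ u 0 ≤ 1 ∧ 0 ≤ u 1 ∧ u 1 + ε * u 0 ≤ 1 + ε}

namespace trapezoid

variable {ε : ℝ}

theorem one_mem (ε : ℝ) : (1 : Fin 2 → ℝ) ∈ trapezoid ε := by
  simp [trapezoid]

theorem subset_nonneg (ε : ℝ) : trapezoid ε ⊆ {u | ∀ k, 0 ≤ u k} := by
  rintro u ⟨hu0, -, hu1, -⟩
  simpa [Fin.forall_fin_two] using ⟨hu0, hu1⟩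

theorem convex (ε : ℝ) : Convex ℝ (trapezoid ε) := by
  rintro u ⟨hu0, hu0', hu1, hu⟩ v ⟨hv0, hv0', hv1, hv⟩ a b ha hb hab
  simp only [trapezoid, Set.mem_ofPred_eq, Pi.add_apply, Pi.smul_apply, smul_eq_mul]
  refine ⟨by positivity, by nlinarith, by positivity, ?_⟩
  linear_combination a * hu + b * hv + (1 + ε) * hab

theorem isClosed (ε : ℝ) : IsClosed (trapezoid ε) := by
  simp only [trapezoid, Set.ofPred_and]
  refine .inter ?_ (.inter ?_ (.inter ?_ ?_)) <;> exact isClosed_le (by fun_prop) (by fun_prop)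

theorem subset_Icc (ε : ℝ) : trapezoid ε ⊆ Set.Icc 0 (fun _ => 1 + |ε|) := by
  rintro u ⟨hu0, hu0', hu1, hu⟩
  have : ε * (1 - u 0) ≤ |ε| := by
    nlinarith [le_abs_self ε, abs_nonneg ε, mul_le_mul_of_nonneg_left hu0 (abs_nonneg ε)]
  simp only [Set.mem_Icc, Pi.le_def, Fin.forall_fin_two, Pi.zero_apply]
  refine ⟨⟨hu0, hu1⟩, ?_, ?_⟩ <;> linarith [abs_nonneg ε]

theorem isCompact (ε : ℝ) : IsCompact (trapezoid ε) :=
  isCompact_Icc.of_isClosed_subset (isClosed ε) (subset_Icc ε)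

theorem zero_subset (hε : 0 ≤ ε) : trapezoid 0 ⊆ trapezoid ε := by
  rintro u ⟨hu0, hu0', hu1, hu⟩
  exact ⟨hu0, hu0', hu1, by nlinarith⟩

theorem hausdorffDist_zero_le (hε : 0 ≤ ε) : hausdorffDist (trapezoid ε) (trapezoid 0) ≤ ε := by
  refine hausdorffDist_le_of_mem_dist hε (fun u hu => ?_)
    (fun u hu => ⟨u, zero_subset hε hu, by simpa using hε⟩)
  obtain ⟨hu0, hu0', hu1, hu⟩ := hu
  refine ⟨![u 0, min (u 1) 1], ⟨by simpa, by simpa, by simp [hu1], by simp⟩, ?_⟩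
  rw [dist_pi_le_iff hε, Fin.forall_fin_two]
  refine ⟨by simpa using hε, ?_⟩
  simp only [Matrix.cons_val_one, Matrix.cons_val_zero, Real.dist_eq]
  rw [abs_le]
  constructor <;> cases min_choice (u 1) 1 <;> nlinarith [min_le_left (u 1) 1, min_le_right (u 1) 1]

theorem isGreatest_zero : IsGreatest (trapezoid 0) 1 := by
  refine ⟨one_mem 0, ?_⟩
  rintro u ⟨-, hu0', -, hu⟩
  simp only [Pi.le_def, Fin.forall_fin_two, Pi.one_apply]
  exact ⟨hu0', by linarith⟩

theorem apex_mem_paretoSet (hε : 0 < ε) : ![0, 1 + ε] ∈ paretoSet (trapezoid ε) := by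
  refine ⟨⟨by simp, by simp, by simp; linarith, by simp⟩, ?_⟩
  rintro v ⟨hv0, -, -, hv⟩ hle
  simp only [Fin.forall_fin_two, Matrix.cons_val_zero, Matrix.cons_val_one] at hle
  -- on the line `u 1 = 1 + ε` the constraint `u 1 + ε u 0 ≤ 1 + ε` forces `u 0 = 0`
  have hv0 : v 0 = 0 := le_antisymm (by nlinarith) hv0
  have hv1 : v 1 = 1 + ε := by
    rw [hv0, mul_zero] at hv
    linarith
  ext k
  fin_cases k <;> simp [hv0, hv1]

theorem one_le_hausdorffDist_closure_paretoSet (hε : 0 < ε) :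
    1 ≤ hausdorffDist (closure (paretoSet (trapezoid ε))) (closure (paretoSet (trapezoid 0))) := by
  rw [paretoSet_eq_singleton_of_isGreatest isGreatest_zero, closure_singleton]
  have hbdd : Bornology.IsBounded (closure (paretoSet (trapezoid ε))) :=
    ((isCompact ε).isBounded.subset (Set.sep_subset _ _)).closure
  refine le_trans ?_ (dist_le_hausdorffDist_singleton hbdd (subset_closure (apex_mem_paretoSet hε)))
  simpa using dist_le_pi_dist ![0, 1 + ε] 1 0

end trapezoid

/-- The map sending a nonempty compact convex subset of `ℝ₊²` to the closure of its Pareto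
set is not continuous for the Hausdorff metric: there is a sequence `Cₘ` of nonempty compact
convex subsets of `ℝ₊²` converging in Hausdorff distance to a nonempty compact convex
`D ⊆ ℝ₊²` such that the closures of the Pareto sets of the `Cₘ` do not converge in
Hausdorff distance to the closure of the Pareto set of `D`. -/
theorem closure_pareto_not_continuous :
    ∃ (C : ℕ → Set (Fin 2 → ℝ)) (D : Set (Fin 2 → ℝ)),
      (∀ m, (C m).Nonempty ∧ IsCompact (C m) ∧ Convex ℝ (C m) ∧
        C m ⊆ {u | ∀ k, 0 ≤ u k}) ∧
      D.Nonempty ∧ IsCompact D ∧ Convex ℝ D ∧ D ⊆ {u | ∀ k, 0 ≤ u k} ∧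
      Filter.Tendsto (fun m => Metric.hausdorffDist (C m) D) Filter.atTop (nhds 0) ∧
      ¬ Filter.Tendsto (fun m => Metric.hausdorffDist
          (closure {u ∈ C m | ∀ v ∈ C m, (∀ k, u k ≤ v k) → v = u})
          (closure {u ∈ D | ∀ v ∈ D, (∀ k, u k ≤ v k) → v = u}))
        Filter.atTop (nhds 0) := by
  have hε : ∀ m : ℕ, 0 < 1 / ((m : ℝ) + 1) := fun m => by positivity
  refine ⟨fun m => trapezoid (1 / (m + 1)), trapezoid 0,
    fun m => ⟨⟨1, trapezoid.one_mem _⟩, trapezoid.isCompact _, trapezoid.convex _,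
      trapezoid.subset_nonneg _⟩,
    ⟨1, trapezoid.one_mem 0⟩, trapezoid.isCompact 0, trapezoid.convex 0, trapezoid.subset_nonneg 0,
    ?_, fun h => ?_⟩
  · exact squeeze_zero (fun _ => hausdorffDist_nonneg)
      (fun m => trapezoid.hausdorffDist_zero_le (hε m).le) tendsto_one_div_add_atTop_nhds_zero_nat
  · obtain ⟨m, hm⟩ := (h.eventually (gt_mem_nhds one_pos)).exists
    exact (trapezoid.one_le_hausdorffDist_closure_paretoSet (hε m)).not_gt hm
end

section
/- There is no continuous Pareto-optimal general policy function in dimension 2: no map α from the space of nonempty compact subsets of ℝ₊² (with the Hausdorff metric) to ℝ₊² can simultaneously satisfy, for every nonempty compact U ⊆ ℝ₊², that α(U) ∈ U and α(U) is Pareto optimal in U, and be continuous. -/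
/-!
Consider the two-point sets `{(1, 1), p t}`, where `p` runs from `(2, 2)` to `(0, 0)` without
passing through `(1, 1)`. Pareto optimality forces the selected point to be `p 0` at the start and
`(1, 1)` at the end. But a continuous selection from two distinct, continuously moving points over
a connected parameter space must follow one of them throughout.
-/

open TopologicalSpace unitInterval

theorem PreconnectedSpace.forall_eq_or_forall_eq {X Y : Type*} [TopologicalSpace X]
    [PreconnectedSpace X] [TopologicalSpace Y] [T2Space Y] {f g h : X → Y} (hf : Continuous f)
    (hg : Continuous g) (hh : Continuous h) (hgh : ∀ x, g x ≠ h x)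
    (hfgh : ∀ x, f x = g x ∨ f x = h x) : (∀ x, f x = g x) ∨ (∀ x, f x = h x) := by
  have hclopen : IsClopen {x | f x = g x} := by
    have hcompl : {x | f x = g x} = {x | f x = h x}ᶜ := by
      ext x
      exact ⟨fun hx hx' => hgh x (hx.symm.trans hx'), (hfgh x).resolve_right⟩
    exact ⟨isClosed_eq hf hg, hcompl ▸ (isClosed_eq hf hh).isOpen_compl⟩
  rcases isClopen_iff.1 hclopen with hempty | huniv
  · exact Or.inr fun x => (hfgh x).resolve_left (Set.eq_empty_iff_forall_notMem.1 hempty x)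
  · exact Or.inl (Set.eq_univ_iff_forall.1 huniv)

/-- A path from `(2, 2)`, which dominates `1 = (1, 1)`, to `(0, 0)`, which `1` dominates,
avoiding `1`. -/
noncomputable def detour (t : ℝ) : Fin 2 → ℝ := ![2 - 2 * t ^ 2, 2 * (1 - t) ^ 2]

theorem continuous_detour : Continuous detour := by
  unfold detour
  fun_prop

theorem detour_ne_one (t : ℝ) : detour t ≠ 1 := by
  intro h
  have h0 : 2 - 2 * t ^ 2 = 1 := congrFun h 0
  have h1 : 2 * (1 - t) ^ 2 = 1 := congrFun h 1
  nlinarith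

theorem one_le_detour_zero : 1 ≤ detour 0 := by
  intro k
  fin_cases k <;> norm_num [detour]

theorem detour_one_le_one : detour 1 ≤ 1 := by
  intro k
  fin_cases k <;> norm_num [detour]

theorem detour_nonneg {t : ℝ} (ht : t ∈ I) : 0 ≤ detour t := by
  obtain ⟨ht0, ht1⟩ := ht
  intro k
  fin_cases k
  · show 0 ≤ 2 - 2 * t ^ 2
    nlinarith
  · show 0 ≤ 2 * (1 - t) ^ 2
    positivity

open TopologicalSpace in
/-- There is no continuous Pareto-optimal general policy function in dimension 2: no map
from the nonempty compact subsets of `ℝ₊²` (with the Hausdorff metric) to `ℝ₊²` can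
select from each set a Pareto optimal point and be continuous. -/
theorem no_continuous_pareto_optimal_general_policy :
    ¬ ∃ α : NonemptyCompacts (Fin 2 → ℝ) → (Fin 2 → ℝ),
      (∀ K : NonemptyCompacts (Fin 2 → ℝ), (K : Set (Fin 2 → ℝ)) ⊆ {u | ∀ k, 0 ≤ u k} →
        α K ∈ (K : Set (Fin 2 → ℝ)) ∧
        ∀ v ∈ (K : Set (Fin 2 → ℝ)), (∀ k, α K k ≤ v k) → v = α K) ∧
      ContinuousOn α {K : NonemptyCompacts (Fin 2 → ℝ) |
        (K : Set (Fin 2 → ℝ)) ⊆ {u | ∀ k, 0 ≤ u k}} := by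
  rintro ⟨α, hα, hcont⟩
  let K : I → NonemptyCompacts (Fin 2 → ℝ) := fun t => {1} ⊔ {detour t}
  have hK_nonneg (t : I) : (K t : Set (Fin 2 → ℝ)) ⊆ {u | ∀ k, 0 ≤ u k} := by
    rintro u (rfl | rfl)
    · exact fun _ => zero_le_one
    · exact detour_nonneg t.2
  have hK : Continuous K := NonemptyCompacts.lipschitz_sup.continuous.comp <|
    continuous_const.prodMk <| NonemptyCompacts.isometry_singleton.continuous.comp <|
      continuous_detour.comp continuous_subtype_val
  rcases PreconnectedSpace.forall_eq_or_forall_eq (hcont.comp_continuous hK hK_nonneg)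
    continuous_const (continuous_detour.comp continuous_subtype_val)
    (fun t => (detour_ne_one t).symm) (fun t => (hα _ (hK_nonneg t)).1) with h | h
  · have hpareto := (hα (K 0) (hK_nonneg 0)).2 (detour 0) (Or.inr rfl)
      ((h 0).trans_le one_le_detour_zero)
    exact detour_ne_one 0 (hpareto.trans (h 0))
  · have hpareto := (hα (K 1) (hK_nonneg 1)).2 1 (Or.inl rfl)
      ((h 1).trans_le detour_one_le_one)
    exact detour_ne_one 1 ((h 1).symm.trans hpareto.symm)
end

section
/- Every sum-optimizing convex policy function in dimension 2 is discontinuous: if α assigns to each nonempty compact convex U ⊆ ℝ₊² a point α(U) ∈ U with α(U)₁ + α(U)₂ = sup_{u∈U} (u₁ + u₂), then α is not continuous for the Hausdorff metric on nonempty compact convex subsets of ℝ₊². -/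
/-!
The segment `[e₀, e₁]` lies on a level line of the coordinate sum. Stretching either endpoint by a
factor `t > 1` gives segments converging to `[e₀, e₁]` in the Hausdorff metric, on which the
stretched endpoint is the only maximizer of the sum; so continuity would force `α [e₀, e₁]` to be
both `e₀` and `e₁`.
-/

open Set Filter Topology TopologicalSpace Metric

section TopologicalVectorSpace

variable {E : Type*} [TopologicalSpace E] [AddCommGroup E] [Module ℝ E] [ContinuousAdd E]
  [ContinuousSMul ℝ E]

theorem isCompact_segment (p q : E) : IsCompact (segment ℝ p q) := by
  rw [segment_eq_image]
  exact isCompact_Icc.image (by fun_prop)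

protected noncomputable def TopologicalSpace.NonemptyCompacts.segment (p q : E) :
    NonemptyCompacts E :=
  ⟨⟨segment ℝ p q, isCompact_segment p q⟩, ⟨p, left_mem_segment ℝ p q⟩⟩

namespace TopologicalSpace.NonemptyCompacts

@[simp]
theorem coe_segment (p q : E) :
    (NonemptyCompacts.segment p q : Set E) = _root_.segment ℝ p q := rfl

theorem segment_symm (p q : E) :
    NonemptyCompacts.segment p q = NonemptyCompacts.segment q p :=
  NonemptyCompacts.ext (_root_.segment_symm ℝ p q)

end TopologicalSpace.NonemptyCompacts

end TopologicalVectorSpace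

section LinearFunctional

variable {E : Type*} [AddCommGroup E] [Module ℝ E] (f : E →ₗ[ℝ] ℝ) {p q : E}

theorem LinearMap.sSup_image_segment (hpq : f p ≤ f q) :
    sSup (f '' segment ℝ p q) = f q := by
  rw [← f.coe_toAffineMap, image_segment, f.coe_toAffineMap, segment_eq_Icc hpq, csSup_Icc hpq]

theorem LinearMap.eq_right_of_mem_segment {x : E} (hx : x ∈ segment ℝ p q) (hpq : f p < f q)
    (hxq : f x = f q) : x = q := by
  obtain ⟨a, b, ha, hb, hab, rfl⟩ := hx
  obtain rfl : b = 1 - a := by linarith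
  simp only [map_add, map_smul, smul_eq_mul] at hxq
  obtain rfl : a = 0 := by nlinarith
  simp

end LinearFunctional

variable {E : Type*} [NormedAddCommGroup E] [NormedSpace ℝ E]

namespace TopologicalSpace.NonemptyCompacts

theorem exists_dist_le_of_mem_segment {p q x : E} (q' : E) (hx : x ∈ _root_.segment ℝ p q) :
    ∃ y ∈ _root_.segment ℝ p q', dist x y ≤ dist q q' := by
  obtain ⟨a, b, ha, hb, hab, rfl⟩ := hx
  refine ⟨a • p + b • q', ⟨a, b, ha, hb, hab, rfl⟩, ?_⟩
  calc dist (a • p + b • q) (a • p + b • q') = b * dist q q' := by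
        rw [dist_add_left, dist_smul₀, Real.norm_of_nonneg hb]
    _ ≤ dist q q' := mul_le_of_le_one_left dist_nonneg (by linarith)

theorem lipschitzWith_segment (p : E) : LipschitzWith 1 (NonemptyCompacts.segment p) := by
  refine LipschitzWith.of_dist_le_mul fun q q' => ?_
  rw [NNReal.coe_one, one_mul, NonemptyCompacts.dist_eq]
  refine hausdorffDist_le_of_mem_dist dist_nonneg (fun x hx => ?_) (fun x hx => ?_)
  · exact exists_dist_le_of_mem_segment q' hx
  · rw [dist_comm q]
    exact exists_dist_le_of_mem_segment q hx

end TopologicalSpace.NonemptyCompacts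

def convexCompactsIn (C : Set E) : Set (NonemptyCompacts E) :=
  {K | Convex ℝ (K : Set E) ∧ (K : Set E) ⊆ C}

def IsOptimizingPolicyOn (f : E →ₗ[ℝ] ℝ) (D : Set (NonemptyCompacts E))
    (α : NonemptyCompacts E → E) : Prop :=
  ∀ K ∈ D, α K ∈ (K : Set E) ∧ f (α K) = sSup (f '' K)

theorem segment_mem_convexCompactsIn {C : ConvexCone ℝ E} {p q : E} (hp : p ∈ C) (hq : q ∈ C) :
    NonemptyCompacts.segment p q ∈ convexCompactsIn (C : Set E) :=
  ⟨convex_segment p q, C.convex.segment_subset hp hq⟩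

namespace IsOptimizingPolicyOn

variable {f : E →ₗ[ℝ] ℝ} {C : ConvexCone ℝ E} {α : NonemptyCompacts E → E} {p q : E}

theorem apply_segment (hα : IsOptimizingPolicyOn f (convexCompactsIn (C : Set E)) α)
    (hp : p ∈ C) (hq : q ∈ C) (hpq : f p < f q) :
    α (NonemptyCompacts.segment p q) = q := by
  obtain ⟨hmem, hmax⟩ := hα _ (segment_mem_convexCompactsIn hp hq)
  rw [NonemptyCompacts.coe_segment, f.sSup_image_segment hpq.le] at hmax
  exact f.eq_right_of_mem_segment hmem hpq hmax

theorem apply_segment_of_continuousWithinAt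
    (hα : IsOptimizingPolicyOn f (convexCompactsIn (C : Set E)) α)
    (hp : p ∈ C) (hq : q ∈ C) (hpq : f p ≤ f q) (hq₀ : 0 < f q)
    (hcont : ContinuousWithinAt α (convexCompactsIn (C : Set E))
      (NonemptyCompacts.segment p q)) :
    α (NonemptyCompacts.segment p q) = q := by
  set stretched : ℝ → NonemptyCompacts E := fun t => NonemptyCompacts.segment p (t • q)
  have hsmul : Continuous fun t : ℝ => t • q := continuous_id.smul continuous_const
  have hstretched : Tendsto stretched (𝓝[>] 1)
      (𝓝[convexCompactsIn (C : Set E)] (NonemptyCompacts.segment p q)) := by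
    refine tendsto_nhdsWithin_iff.2 ⟨?_, ?_⟩
    · have hc : Continuous stretched :=
        (NonemptyCompacts.lipschitzWith_segment p).continuous.comp hsmul
      simpa [stretched] using (hc.tendsto 1).mono_left nhdsWithin_le_nhds
    · filter_upwards [self_mem_nhdsWithin] with t (ht : 1 < t)
      exact segment_mem_convexCompactsIn hp (C.smul_mem (by linarith) hq)
  have hα_stretched : α ∘ stretched =ᶠ[𝓝[>] 1] fun t => t • q := by
    filter_upwards [self_mem_nhdsWithin] with t (ht : 1 < t)
    refine hα.apply_segment hp (C.smul_mem (by linarith) hq) ?_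
    rw [map_smul, smul_eq_mul]
    nlinarith
  have hlim : Tendsto (fun t : ℝ => t • q) (𝓝[>] 1) (𝓝 q) := by
    simpa using (hsmul.tendsto 1).mono_left nhdsWithin_le_nhds
  exact tendsto_nhds_unique ((hcont.tendsto.comp hstretched).congr' hα_stretched) hlim

theorem not_continuousOn (hα : IsOptimizingPolicyOn f (convexCompactsIn (C : Set E)) α)
    (hp : p ∈ C) (hq : q ∈ C) (hpq : f p = f q) (hq₀ : 0 < f q) (hne : p ≠ q) :
    ¬ ContinuousOn α (convexCompactsIn (C : Set E)) := by
  intro hcont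
  have h₁ := hα.apply_segment_of_continuousWithinAt hp hq hpq.le hq₀
    (hcont _ (segment_mem_convexCompactsIn hp hq))
  have h₂ := hα.apply_segment_of_continuousWithinAt hq hp hpq.ge (hpq ▸ hq₀)
    (hcont _ (segment_mem_convexCompactsIn hq hp))
  rw [NonemptyCompacts.segment_symm] at h₂
  exact hne (h₂.symm.trans h₁)

end IsOptimizingPolicyOn

open TopologicalSpace in
/-- Every sum-optimizing convex policy function in dimension 2 is discontinuous: if `α`
assigns to each nonempty compact convex `U ⊆ ℝ₊²` a point of `U` maximizing the sum of
coordinates, then `α` is not continuous (for the Hausdorff metric) on the nonempty compact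
convex subsets of `ℝ₊²`. -/
theorem sum_optimizing_convex_policy_discontinuous
    (α : NonemptyCompacts (Fin 2 → ℝ) → (Fin 2 → ℝ))
    (hα : ∀ K : NonemptyCompacts (Fin 2 → ℝ), Convex ℝ (K : Set (Fin 2 → ℝ)) →
      (K : Set (Fin 2 → ℝ)) ⊆ {u | ∀ k, 0 ≤ u k} →
      α K ∈ (K : Set (Fin 2 → ℝ)) ∧
      α K 0 + α K 1 = sSup ((fun u : Fin 2 → ℝ => u 0 + u 1) '' (K : Set (Fin 2 → ℝ)))) :
    ¬ ContinuousOn α {K : NonemptyCompacts (Fin 2 → ℝ) |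
        Convex ℝ (K : Set (Fin 2 → ℝ)) ∧ (K : Set (Fin 2 → ℝ)) ⊆ {u | ∀ k, 0 ≤ u k}} := by
  let sum : (Fin 2 → ℝ) →ₗ[ℝ] ℝ := LinearMap.proj (R := ℝ) (φ := fun _ => ℝ) 0 + LinearMap.proj 1
  have hopt : IsOptimizingPolicyOn sum
      (convexCompactsIn (ConvexCone.positive ℝ (Fin 2 → ℝ) : Set (Fin 2 → ℝ))) α :=
    fun K hK => hα K hK.1 hK.2
  exact hopt.not_continuousOn (p := Pi.single 0 1) (q := Pi.single 1 1)
    (Pi.single_nonneg.2 zero_le_one) (Pi.single_nonneg.2 zero_le_one) (by simp [sum])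
    (by simp [sum]) fun h => by simpa using congrFun h 0
end

section
/- Let n ≥ 1 and let U ⊆ ℝ₊ⁿ be convex. If x, y ∈ U both satisfy ∏ₖ xₖ = ∏ₖ yₖ = sup_{u∈U} ∏ₖ uₖ and this common value is strictly positive, then x = y. In particular, a compact convex U ⊆ ℝ₊ⁿ containing a point with all coordinates positive has a unique maximizer of the product of coordinates. -/
/-!
If two distinct maximizers `x ≠ y` of the product of coordinates had the same positive value `p`,
all their coordinates would be positive, and coordinatewise AM-GM, strict where `x k ≠ y k`, gives
`p ^ 2 = ∏ x * ∏ y < (∏ m) ^ 2` for the midpoint `m ∈ U`, contradicting maximality.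
On a compact set the supremum is attained, and it is positive as soon as `U` has a point with
all coordinates positive.
-/

open Finset

lemma isMaxOn_of_eq_sSup_image_of_ne_zero {α : Type*} {f : α → ℝ} {U : Set α} {x : α}
    (hfx : f x = sSup (f '' U)) (hne : f x ≠ 0) : IsMaxOn f U x := by
  have hbdd : BddAbove (f '' U) := by
    by_contra hunbdd
    exact hne (hfx.trans (Real.sSup_of_not_bddAbove hunbdd))
  exact fun u hu => hfx ▸ le_csSup hbdd (Set.mem_image_of_mem f hu)

lemma mul_le_sq_half_add (a b : ℝ) : a * b ≤ ((a + b) / 2) ^ 2 := by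
  nlinarith [sq_nonneg (a - b)]

lemma mul_lt_sq_half_add {a b : ℝ} (hab : a ≠ b) : a * b < ((a + b) / 2) ^ 2 := by
  nlinarith [sq_pos_of_ne_zero (sub_ne_zero.mpr hab)]

section ProductOfCoordinates

variable {ι : Type*} [Fintype ι]

lemma pos_of_prod_pos {x : ι → ℝ} (hx : ∀ k, 0 ≤ x k) (hprod : 0 < ∏ k, x k) (k : ι) :
    0 < x k :=
  (hx k).lt_of_ne fun h => hprod.ne' (prod_eq_zero (mem_univ k) h.symm)

lemma prod_mul_prod_lt_sq_prod_midpoint {x y : ι → ℝ} (hx : ∀ k, 0 < x k) (hy : ∀ k, 0 < y k)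
    (hxy : x ≠ y) : (∏ k, x k) * ∏ k, y k < (∏ k, midpoint ℝ x y k) ^ 2 := by
  obtain ⟨j, hj⟩ := Function.ne_iff.mp hxy
  have hmid : ∀ k, midpoint ℝ x y k = (x k + y k) / 2 := fun k => by
    simp only [midpoint_eq_smul_add, Pi.smul_apply, Pi.add_apply, smul_eq_mul, invOf_eq_inv]
    ring
  rw [← prod_mul_distrib, ← prod_pow]
  refine prod_lt_prod (fun k _ => mul_pos (hx k) (hy k)) (fun k _ => ?_) ⟨j, mem_univ j, ?_⟩
  · exact hmid k ▸ mul_le_sq_half_add (x k) (y k)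
  · exact hmid j ▸ mul_lt_sq_half_add hj

theorem eq_of_isMaxOn_prod {U : Set (ι → ℝ)} (hU : Convex ℝ U)
    (hnonneg : U ⊆ {u | ∀ k, 0 ≤ u k}) {x y : ι → ℝ} (hx : x ∈ U) (hy : y ∈ U)
    (hxmax : IsMaxOn (fun u => ∏ k, u k) U x) (hymax : IsMaxOn (fun u => ∏ k, u k) U y)
    (hpos : 0 < ∏ k, x k) : x = y := by
  by_contra hxy
  have hprod_eq : ∏ k, y k = ∏ k, x k := le_antisymm (hxmax hy) (hymax hx)
  have hlt := prod_mul_prod_lt_sq_prod_midpoint (pos_of_prod_pos (hnonneg hx) hpos)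
    (pos_of_prod_pos (hnonneg hy) (hprod_eq ▸ hpos)) hxy
  rw [hprod_eq, ← sq] at hlt
  have hmid : midpoint ℝ x y ∈ U := hU.midpoint_mem hx hy
  exact (hxmax hmid).not_gt
    (lt_of_pow_lt_pow_left₀ 2 (prod_nonneg fun k _ => hnonneg hmid k) hlt)

theorem eq_of_prod_eq_sSup {U : Set (ι → ℝ)} (hU : Convex ℝ U)
    (hnonneg : U ⊆ {u | ∀ k, 0 ≤ u k}) {x y : ι → ℝ} (hx : x ∈ U) (hy : y ∈ U)
    (hxs : ∏ k, x k = sSup ((fun u => ∏ k, u k) '' U))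
    (hys : ∏ k, y k = sSup ((fun u => ∏ k, u k) '' U)) (hpos : 0 < ∏ k, x k) : x = y := by
  have hypos : ∏ k, y k ≠ 0 := by
    rw [hys, ← hxs]
    exact hpos.ne'
  exact eq_of_isMaxOn_prod hU hnonneg hx hy (isMaxOn_of_eq_sSup_image_of_ne_zero hxs hpos.ne')
    (isMaxOn_of_eq_sSup_image_of_ne_zero hys hypos) hpos

end ProductOfCoordinates

theorem product_maximizer_unique_general (n : ℕ) :
    (∀ U : Set (Fin n → ℝ), Convex ℝ U → U ⊆ {u | ∀ k, 0 ≤ u k} →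
      ∀ x ∈ U, ∀ y ∈ U,
        (∏ k, x k) = sSup ((fun u : Fin n → ℝ => ∏ k, u k) '' U) →
        (∏ k, y k) = sSup ((fun u : Fin n → ℝ => ∏ k, u k) '' U) →
        0 < ∏ k, x k → x = y) ∧
    (∀ U : Set (Fin n → ℝ), U.Nonempty → IsCompact U → Convex ℝ U →
      U ⊆ {u | ∀ k, 0 ≤ u k} → (∃ w ∈ U, ∀ k, 0 < w k) →
      ∃! x : Fin n → ℝ, x ∈ U ∧
        (∏ k, x k) = sSup ((fun u : Fin n → ℝ => ∏ k, u k) '' U)) := by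
  refine ⟨fun U hU hnonneg x hx y hy => eq_of_prod_eq_sSup hU hnonneg hx hy,
    fun U hne hcompact hU hnonneg ⟨w, hw, hwpos⟩ => ?_⟩
  have hcont : Continuous fun u : Fin n → ℝ => ∏ k, u k := by fun_prop
  obtain ⟨x, hx, hxs, hxmax⟩ := hcompact.exists_sSup_image_eq_and_ge hne hcont.continuousOn
  have hpos : 0 < ∏ k, x k := (prod_pos fun k _ => hwpos k).trans_le (hxmax w hw)
  exact ⟨x, ⟨hx, hxs.symm⟩, fun y ⟨hy, hys⟩ =>
    (eq_of_prod_eq_sSup hU hnonneg hx hy hxs.symm hys hpos).symm⟩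

/-- On a convex subset of `ℝ₊ⁿ`, if two points both achieve the supremum of the product of
coordinates and this supremum is strictly positive, then they are equal. In particular, a
compact convex subset of `ℝ₊ⁿ` containing a point with all coordinates positive has a
unique maximizer of the product of coordinates. -/
theorem product_maximizer_unique (n : ℕ) (hn : 1 ≤ n) :
    (∀ U : Set (Fin n → ℝ), Convex ℝ U → U ⊆ {u | ∀ k, 0 ≤ u k} →
      ∀ x ∈ U, ∀ y ∈ U,
        (∏ k, x k) = sSup ((fun u : Fin n → ℝ => ∏ k, u k) '' U) →
        (∏ k, y k) = sSup ((fun u : Fin n → ℝ => ∏ k, u k) '' U) →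
        0 < ∏ k, x k → x = y) ∧
    (∀ U : Set (Fin n → ℝ), U.Nonempty → IsCompact U → Convex ℝ U →
      U ⊆ {u | ∀ k, 0 ≤ u k} → (∃ w ∈ U, ∀ k, 0 < w k) →
      ∃! x : Fin n → ℝ, x ∈ U ∧
        (∏ k, x k) = sSup ((fun u : Fin n → ℝ => ∏ k, u k) '' U)) :=
  product_maximizer_unique_general n
end

section
/- Even convex policy functions cannot be monotone: there is no map α assigning to each nonempty compact convex U ⊆ ℝ₊² a point α(U) ∈ U such that U₁ ⊆ U₂ implies α(U₁) ⪯ α(U₂) for all nonempty compact convex U₁, U₂ ⊆ ℝ₊². -/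
/-!
Feeding a singleton `{x}` to a policy forces `α {x} = x`, so monotonicity makes `α V` an
upper bound of `V` lying in `V`: a monotone policy must pick the greatest element. But the
segment between the unit vectors `e₀` and `e₁` is compact, convex and nonnegative, and a
segment has a greatest element only when its endpoints are comparable, which `e₀` and `e₁`
are not.
-/

open Set

theorem isCompact_segment_s8 (𝕜 : Type*) {E : Type*} [Field 𝕜] [LinearOrder 𝕜]
    [IsStrictOrderedRing 𝕜] [TopologicalSpace 𝕜] [OrderClosedTopology 𝕜] [CompactIccSpace 𝕜]
    [ContinuousAdd 𝕜] [AddCommGroup E] [Module 𝕜 E] [TopologicalSpace E]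
    [IsTopologicalAddGroup E] [ContinuousSMul 𝕜 E] (a b : E) :
    IsCompact (segment 𝕜 a b) :=
  convexHull_pair (𝕜 := 𝕜) a b ▸ (toFinite _).isCompact_convexHull 𝕜

theorem le_or_le_of_isGreatest_segment {𝕜 E : Type*} [Field 𝕜] [LinearOrder 𝕜]
    [IsStrictOrderedRing 𝕜] [AddCommGroup E] [PartialOrder E] [IsOrderedAddMonoid E]
    [Module 𝕜 E] [PosSMulReflectLE 𝕜 E] {a b g : E} (hg : IsGreatest (segment 𝕜 a b) g) :
    a ≤ b ∨ b ≤ a := by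
  obtain ⟨hg, hupper⟩ := hg
  have hag := hupper (left_mem_segment 𝕜 a b)
  have hbg := hupper (right_mem_segment 𝕜 a b)
  rw [segment_eq_image'] at hg
  obtain ⟨t, ⟨ht₀, -⟩, rfl⟩ := hg
  rcases ht₀.eq_or_lt with rfl | ht
  · simpa using Or.inr hbg
  · exact Or.inl (sub_nonneg.1 (nonneg_of_smul_nonneg_of_pos_left (by simpa using hag) ht))

theorem isGreatest_of_monotone_selection {E : Type*} [Preorder E] {P : Set E → Prop}
    {α : Set E → E} (hmem : ∀ U, P U → α U ∈ U)
    (hmono : ∀ U V, P U → P V → U ⊆ V → α U ≤ α V) {V : Set E} (hV : P V)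
    (hsingleton : ∀ x ∈ V, P {x}) : IsGreatest V (α V) := by
  refine ⟨hmem V hV, fun x hx => ?_⟩
  have hαx : α {x} = x := hmem {x} (hsingleton x hx)
  exact hαx ▸ hmono {x} V (hsingleton x hx) hV (singleton_subset_iff.2 hx)

/-- Even convex policy functions cannot be monotone: there is no map assigning to each
nonempty compact convex `U ⊆ ℝ₊²` a point `α(U) ∈ U` such that `U₁ ⊆ U₂` implies
`α(U₁) ⪯ α(U₂)` componentwise. -/
theorem no_monotone_convex_policy :
    ¬ ∃ α : Set (Fin 2 → ℝ) → (Fin 2 → ℝ),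
      (∀ U : Set (Fin 2 → ℝ), U.Nonempty → IsCompact U → Convex ℝ U →
        U ⊆ {u | ∀ k, 0 ≤ u k} → α U ∈ U) ∧
      (∀ U V : Set (Fin 2 → ℝ),
        U.Nonempty → IsCompact U → Convex ℝ U → U ⊆ {u | ∀ k, 0 ≤ u k} →
        V.Nonempty → IsCompact V → Convex ℝ V → V ⊆ {u | ∀ k, 0 ≤ u k} →
        U ⊆ V → ∀ k, α U k ≤ α V k) := by
  rintro ⟨α, hmem, hmono⟩
  let Admissible (U : Set (Fin 2 → ℝ)) : Prop :=
    U.Nonempty ∧ IsCompact U ∧ Convex ℝ U ∧ U ⊆ Ici 0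
  set e₀ : Fin 2 → ℝ := Pi.single 0 1
  set e₁ : Fin 2 → ℝ := Pi.single 1 1
  have hV : Admissible (segment ℝ e₀ e₁) :=
    ⟨⟨e₀, left_mem_segment ℝ e₀ e₁⟩, isCompact_segment_s8 ℝ e₀ e₁, convex_segment e₀ e₁,
      (convex_Ici 0).segment_subset (Pi.single_nonneg.2 zero_le_one)
        (Pi.single_nonneg.2 zero_le_one)⟩
  have hgreatest := isGreatest_of_monotone_selection (P := Admissible) (α := α)
    (fun U hU => hmem U hU.1 hU.2.1 hU.2.2.1 hU.2.2.2)
    (fun U V hU hV hUV =>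
      hmono U V hU.1 hU.2.1 hU.2.2.1 hU.2.2.2 hV.1 hV.2.1 hV.2.2.1 hV.2.2.2 hUV)
    hV fun x hx => ⟨singleton_nonempty x, isCompact_singleton, convex_singleton x,
      singleton_subset_iff.2 (hV.2.2.2 hx)⟩
  rcases le_or_le_of_isGreatest_segment hgreatest with h | h
  · exact absurd (h 0) (by simp [e₀, e₁])
  · exact absurd (h 1) (by simp [e₀, e₁])
end

section
/- Let n ≥ 1, let f, g : ℝ₊ⁿ → ℝ₊ be monotone index functions (u ⪯ v implies f(u) ≤ f(v) and g(u) ≤ g(v)), and let α be a g-optimizing policy function on the nonempty compact subsets of ℝ₊ⁿ. Then α is f-increasing (i.e., U ⊆ V implies f(α(U)) ≤ f(α(V)) for all nonempty compact U, V ⊆ ℝ₊ⁿ) if and only if α is f-optimizing (i.e., f(α(U)) = sup_{u∈U} f(u) for every nonempty compact U ⊆ ℝ₊ⁿ). -/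
/-!
Increasing implies optimizing for any policy: comparing `U` with the singleton `{u}` of any of
its points gives `f u = f (α {u}) ≤ f (α U)`, and `α U ∈ U`. Conversely, an optimizing policy
is increasing because `sSup` is monotone on sets, which needs `f` to be bounded above on compact
subsets of the orthant; that holds because `f` is monotone there and such a set has an upper
bound in the orthant.
-/

open Set

theorem MonotoneOn.bddAbove_image_of_subset_Ici {X β : Type*} [SemilatticeSup X] [Preorder β]
    {f : X → β} {a : X} (hf : MonotoneOn f (Ici a)) {U : Set X} (hU : BddAbove U)
    (hUa : U ⊆ Ici a) : BddAbove (f '' U) := by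
  obtain ⟨b, hb⟩ := hU
  exact hf.map_bddAbove hUa ⟨b ⊔ a, fun u hu => (hb hu).trans le_sup_left, le_sup_right⟩

section Policy

variable {X : Type*} [TopologicalSpace X] {S : Set X} {f : X → ℝ} {α : Set X → X}

theorem eq_sSup_image_of_increasing
    (hα : ∀ U : Set X, U.Nonempty → IsCompact U → U ⊆ S → α U ∈ U)
    (hinc : ∀ U V : Set X, U.Nonempty → IsCompact U → U ⊆ S →
      V.Nonempty → IsCompact V → V ⊆ S → U ⊆ V → f (α U) ≤ f (α V))
    {U : Set X} (hne : U.Nonempty) (hc : IsCompact U) (hS : U ⊆ S) :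
    f (α U) = sSup (f '' U) := by
  refine (IsGreatest.csSup_eq ⟨mem_image_of_mem f (hα U hne hc hS), ?_⟩).symm
  rintro _ ⟨u, hu, rfl⟩
  have hsingle : {u} ⊆ S := singleton_subset_iff.2 (hS hu)
  have hαu : α {u} = u :=
    mem_singleton_iff.1 (hα {u} (singleton_nonempty u) isCompact_singleton hsingle)
  simpa only [hαu] using hinc {u} U (singleton_nonempty u) isCompact_singleton hsingle hne hc hS
    (singleton_subset_iff.2 hu)

theorem increasing_of_eq_sSup_image
    (hbdd : ∀ V : Set X, IsCompact V → V ⊆ S → BddAbove (f '' V))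
    (hopt : ∀ U : Set X, U.Nonempty → IsCompact U → U ⊆ S → f (α U) = sSup (f '' U))
    {U V : Set X} (hUne : U.Nonempty) (hUc : IsCompact U) (hUS : U ⊆ S)
    (hVne : V.Nonempty) (hVc : IsCompact V) (hVS : V ⊆ S) (hUV : U ⊆ V) :
    f (α U) ≤ f (α V) := by
  rw [hopt U hUne hUc hUS, hopt V hVne hVc hVS]
  exact csSup_le_csSup (hbdd V hVc hVS) (hUne.image f) (image_mono hUV)

end Policy

theorem f_increasing_iff_f_optimizing_general
    (n : ℕ) (f : (Fin n → ℝ) → ℝ)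
    (hf_mono : ∀ u v : Fin n → ℝ, (∀ k, 0 ≤ u k) → (∀ k, 0 ≤ v k) →
      (∀ k, u k ≤ v k) → f u ≤ f v)
    (α : Set (Fin n → ℝ) → (Fin n → ℝ))
    (hα_pol : ∀ U : Set (Fin n → ℝ), U.Nonempty → IsCompact U →
      U ⊆ {u | ∀ k, 0 ≤ u k} → α U ∈ U) :
    (∀ U V : Set (Fin n → ℝ),
        U.Nonempty → IsCompact U → U ⊆ {u | ∀ k, 0 ≤ u k} →
        V.Nonempty → IsCompact V → V ⊆ {u | ∀ k, 0 ≤ u k} →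
        U ⊆ V → f (α U) ≤ f (α V)) ↔
    (∀ U : Set (Fin n → ℝ), U.Nonempty → IsCompact U →
        U ⊆ {u | ∀ k, 0 ≤ u k} → f (α U) = sSup (f '' U)) := by
  have hf_monoOn : MonotoneOn f (Ici 0) := fun u hu v hv huv => hf_mono u v hu hv huv
  have hbdd : ∀ V : Set (Fin n → ℝ), IsCompact V → V ⊆ {u | ∀ k, 0 ≤ u k} →
      BddAbove (f '' V) :=
    fun V hV hV0 => hf_monoOn.bddAbove_image_of_subset_Ici hV.isBounded.bddAbove hV0
  exact ⟨fun hinc U => eq_sSup_image_of_increasing hα_pol hinc,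
    fun hopt U V => increasing_of_eq_sSup_image hbdd hopt⟩

/-- Let `f, g` be monotone index functions on `ℝ₊ⁿ` and let `α` be a `g`-optimizing policy
function on the nonempty compact subsets of `ℝ₊ⁿ`. Then `α` is `f`-increasing if and only
if `α` is `f`-optimizing. -/
theorem f_increasing_iff_f_optimizing
    (n : ℕ) (hn : 1 ≤ n) (f g : (Fin n → ℝ) → ℝ)
    (hf_nonneg : ∀ u : Fin n → ℝ, (∀ k, 0 ≤ u k) → 0 ≤ f u)
    (hg_nonneg : ∀ u : Fin n → ℝ, (∀ k, 0 ≤ u k) → 0 ≤ g u)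
    (hf_mono : ∀ u v : Fin n → ℝ, (∀ k, 0 ≤ u k) → (∀ k, 0 ≤ v k) →
      (∀ k, u k ≤ v k) → f u ≤ f v)
    (hg_mono : ∀ u v : Fin n → ℝ, (∀ k, 0 ≤ u k) → (∀ k, 0 ≤ v k) →
      (∀ k, u k ≤ v k) → g u ≤ g v)
    (α : Set (Fin n → ℝ) → (Fin n → ℝ))
    (hα_pol : ∀ U : Set (Fin n → ℝ), U.Nonempty → IsCompact U →
      U ⊆ {u | ∀ k, 0 ≤ u k} → α U ∈ U)
    (hα_gopt : ∀ U : Set (Fin n → ℝ), U.Nonempty → IsCompact U →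
      U ⊆ {u | ∀ k, 0 ≤ u k} → g (α U) = sSup (g '' U)) :
    (∀ U V : Set (Fin n → ℝ),
        U.Nonempty → IsCompact U → U ⊆ {u | ∀ k, 0 ≤ u k} →
        V.Nonempty → IsCompact V → V ⊆ {u | ∀ k, 0 ≤ u k} →
        U ⊆ V → f (α U) ≤ f (α V)) ↔
    (∀ U : Set (Fin n → ℝ), U.Nonempty → IsCompact U →
        U ⊆ {u | ∀ k, 0 ≤ u k} → f (α U) = sSup (f '' U)) :=
  f_increasing_iff_f_optimizing_general n f hf_mono α hα_pol
end

section
/- Let N ≥ 2, M ≥ 1, let S_{M,N} = {u ∈ ℝ₊^N : u₁/M + Σ_{k=2}^N uₖ ≤ 1}, and let q be the max-min fair allocation of S_{M,N}, i.e., the constant vector with all coordinates equal to M/(M(N−1)+1). Then the sum-inefficiency of q, namely (sup_{u∈S_{M,N}} Σₖ uₖ) / (Σₖ qₖ), equals (M(N−1)+1)/N, and for fixed N ≥ 2 this quantity tends to +∞ as M → ∞ (it is asymptotically equivalent to M·(N−1)/N). -/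
/-!
Every feasible `u` has `∑ uₖ = u₁ + ∑_{k ≥ 2} uₖ ≤ M (u₁/M + ∑_{k ≥ 2} uₖ) ≤ M` because `M ≥ 1`, and
the vertex `M e₁` attains this, so the utilitarian optimum of `S_{M,N}` is `M`. The max-min fair
allocation has total `N M/(M(N−1)+1)`, whence the ratio `(M(N−1)+1)/N`, which is affine in `M`
with positive slope and equals `1 + 1/(M(N−1))` times `M(N−1)/N`.
-/

open Filter Finset Topology

section UtilitySet

variable {ι : Type*} [Fintype ι] [DecidableEq ι]

/-- The utility set `S_{M,N}`, with the distinguished agent `i₀` in the role of agent `1`. -/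
def utilitySet (M : ℝ) (i₀ : ι) : Set (ι → ℝ) :=
  {u | (∀ k, 0 ≤ u k) ∧ u i₀ / M + ∑ k ∈ univ.erase i₀, u k ≤ 1}

theorem sum_le_of_mem_utilitySet {M : ℝ} (hM : 1 ≤ M) {i₀ : ι} {u : ι → ℝ}
    (hu : u ∈ utilitySet M i₀) : ∑ k, u k ≤ M := by
  obtain ⟨hnonneg, hbudget⟩ := hu
  have hM0 : 0 < M := one_pos.trans_le hM
  have hrest : 0 ≤ ∑ k ∈ univ.erase i₀, u k := sum_nonneg fun k _ => hnonneg k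
  calc ∑ k, u k = u i₀ + ∑ k ∈ univ.erase i₀, u k := (add_sum_erase _ _ (mem_univ _)).symm
    _ ≤ M * (u i₀ / M) + M * ∑ k ∈ univ.erase i₀, u k := by
        rw [mul_div_cancel₀ _ hM0.ne']
        gcongr
        exact le_mul_of_one_le_left hrest hM
    _ = M * (u i₀ / M + ∑ k ∈ univ.erase i₀, u k) := by ring
    _ ≤ M := mul_le_of_le_one_right hM0.le hbudget

theorem single_mem_utilitySet {M : ℝ} (hM : 0 < M) (i₀ : ι) :
    Pi.single i₀ M ∈ utilitySet M i₀ := by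
  refine ⟨fun k => ?_, ?_⟩
  · rcases eq_or_ne k i₀ with rfl | hk
    · simpa using hM.le
    · simp [Pi.single_eq_of_ne hk]
  · simp [sum_pi_single', hM.ne']

theorem isGreatest_sum_utilitySet {M : ℝ} (hM : 1 ≤ M) (i₀ : ι) :
    IsGreatest ((fun u : ι → ℝ => ∑ k, u k) '' utilitySet M i₀) M := by
  refine ⟨⟨Pi.single i₀ M, single_mem_utilitySet (one_pos.trans_le hM) i₀, by simp⟩, ?_⟩
  rintro _ ⟨u, hu, rfl⟩
  exact sum_le_of_mem_utilitySet hM hu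

theorem sSup_sum_utilitySet {M : ℝ} (hM : 1 ≤ M) (i₀ : ι) :
    sSup ((fun u : ι → ℝ => ∑ k, u k) '' utilitySet M i₀) = M :=
  (isGreatest_sum_utilitySet hM i₀).csSup_eq

end UtilitySet

theorem div_sum_maxMinFair_eq {N : ℕ} (hN : 1 ≤ N) {M : ℝ} (hM : 0 < M) :
    M / (∑ _k : Fin N, M / (M * ((N : ℝ) - 1) + 1)) = (M * ((N : ℝ) - 1) + 1) / N := by
  have hN' : (1 : ℝ) ≤ N := by exact_mod_cast hN
  have hden : 0 < M * ((N : ℝ) - 1) + 1 := by nlinarith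
  rw [sum_const, card_univ, Fintype.card_fin, nsmul_eq_mul]
  field_simp

theorem tendsto_affine_div_atTop {a c : ℝ} (ha : 0 < a) (b : ℝ) (hc : 0 < c) :
    Tendsto (fun x : ℝ => (x * a + b) / c) atTop atTop :=
  ((tendsto_id.atTop_mul_const ha).atTop_add tendsto_const_nhds).atTop_div_const hc

theorem tendsto_affine_div_linear_atTop {a c : ℝ} (ha : 0 < a) (b : ℝ) (hc : c ≠ 0) :
    Tendsto (fun x : ℝ => ((x * a + b) / c) / (x * a / c)) atTop (𝓝 1) := by
  have hlim : Tendsto (fun x : ℝ => 1 + b * (x * a)⁻¹) atTop (𝓝 1) := by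
    simpa using ((tendsto_id.atTop_mul_const ha).inv_tendsto_atTop.const_mul b).const_add 1
  refine hlim.congr' ?_
  filter_upwards [eventually_gt_atTop 0] with x hx
  have : x * a ≠ 0 := (mul_pos hx ha).ne'
  field_simp

/-- The sum-inefficiency of the max-min fair allocation `q` of `S_{M,N}` (the constant
vector with coordinates `M/(M(N−1)+1)`) equals `(M(N−1)+1)/N`; for fixed `N ≥ 2` it tends
to `+∞` as `M → ∞` and is asymptotically equivalent to `M(N−1)/N`. -/
theorem smn_inefficiency_maxmin_fair :
    (∀ (N : ℕ) (hN : 2 ≤ N), ∀ (M : ℝ), 1 ≤ M →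
      sSup ((fun u : Fin N → ℝ => ∑ k, u k) ''
          {u : Fin N → ℝ | (∀ k, 0 ≤ u k) ∧
            u ⟨0, by omega⟩ / M + ∑ k ∈ Finset.univ.erase ⟨0, by omega⟩, u k ≤ 1}) /
        (∑ _k : Fin N, M / (M * ((N : ℝ) - 1) + 1)) =
      (M * ((N : ℝ) - 1) + 1) / N) ∧
    (∀ (N : ℕ), 2 ≤ N →
      Filter.Tendsto (fun M : ℝ => (M * ((N : ℝ) - 1) + 1) / N)
        Filter.atTop Filter.atTop) ∧
    (∀ (N : ℕ), 2 ≤ N →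
      Filter.Tendsto (fun M : ℝ => ((M * ((N : ℝ) - 1) + 1) / N) / (M * ((N : ℝ) - 1) / N))
        Filter.atTop (nhds 1)) := by
  have slope_pos : ∀ N : ℕ, 2 ≤ N → (0 : ℝ) < (N : ℝ) - 1 := fun N hN => by
    have : (2 : ℝ) ≤ N := by exact_mod_cast hN
    linarith
  refine ⟨fun N hN M hM => ?_, fun N hN => ?_, fun N hN => ?_⟩
  · change sSup (_ '' utilitySet M (⟨0, by omega⟩ : Fin N)) / _ = _
    rw [sSup_sum_utilitySet hM]
    exact div_sum_maxMinFair_eq (by omega) (one_pos.trans_le hM)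
  · exact tendsto_affine_div_atTop (slope_pos N hN) 1 (by positivity)
  · exact tendsto_affine_div_linear_atTop (slope_pos N hN) 1 (by positivity)
end

section
/- The Jain index is not monotone: for n ≥ 2 there exist u, v ∈ ℝ₊ⁿ with uₖ ≤ vₖ for all k and J(u) > J(v), where J(w) = (Σₖ wₖ)² / (n · Σₖ wₖ²). Consequently, there exists a nonempty compact convex set U ⊆ ℝ₊², a point v ∈ U that is the unique maximizer of min(u₁,u₂) over U (hence the max-min fair allocation of U), and a point u ∈ U with J(u) > J(v); i.e., the max-min fair allocation may have a sub-optimal Jain index. -/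
/-!
Adding `t ≠ 0` to one coordinate of the all-ones vector of length `n` lowers the Jain index from
`1` to `(n + t)² / (n (n + 2t + t²))`, which is `< 1` exactly when `n ≥ 2`. In dimension two,
`v = (2, 1)` dominates `u = (1/2, 1/2)` strictly in both coordinates, so the minimum coordinate
strictly increases along the segment `[u, v]`: `v` is the unique max-min fair point of this
compact convex set, yet `J(v) = 9/10 < 1 = J(u)`.
-/

open Finset

noncomputable def jainIndex {n : ℕ} (w : Fin n → ℝ) : ℝ :=
  (∑ k, w k) ^ 2 / (n * ∑ k, w k ^ 2)

theorem jainIndex_const {n : ℕ} [NeZero n] {c : ℝ} (hc : c ≠ 0) :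
    jainIndex (fun _ : Fin n => c) = 1 := by
  have hn : (n : ℝ) ≠ 0 := NeZero.ne _
  simp only [jainIndex, sum_const, card_univ, Fintype.card_fin, nsmul_eq_mul]
  field_simp

theorem jainIndex_one_add_single_lt_one {n : ℕ} (hn : 2 ≤ n) (i : Fin n) {t : ℝ} (ht : t ≠ 0) :
    jainIndex (1 + Pi.single i t) < 1 := by
  have hsum : ∑ k, (1 + Pi.single i t : Fin n → ℝ) k = n + t := by
    simp [sum_add_distrib]
  have hsq : ∑ k, (1 + Pi.single i t : Fin n → ℝ) k ^ 2 = n + (2 * t + t ^ 2) := by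
    have (k : Fin n) : (1 + Pi.single i t : Fin n → ℝ) k ^ 2 =
        1 + (Pi.single i (2 * t + t ^ 2) : Fin n → ℝ) k := by
      rcases eq_or_ne k i with rfl | hk
      · simp; ring
      · simp [hk]
    rw [sum_congr rfl fun k _ => this k, sum_add_distrib]
    simp
  have hn2 : (2 : ℝ) ≤ n := by exact_mod_cast hn
  have ht2 : 0 < t ^ 2 := by positivity
  rw [jainIndex, hsum, hsq, div_lt_one (by nlinarith [sq_nonneg (1 + t)])]
  nlinarith

theorem jainIndex_not_monotone {n : ℕ} (hn : 2 ≤ n) :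
    ∃ u v : Fin n → ℝ, 0 ≤ u ∧ u ≤ v ∧ jainIndex v < jainIndex u := by
  have : NeZero n := ⟨by omega⟩
  refine ⟨1, 1 + Pi.single 0 1, zero_le_one, le_add_of_nonneg_right ?_, ?_⟩
  · exact Pi.single_nonneg.2 zero_le_one
  · rw [show jainIndex (1 : Fin n → ℝ) = 1 from jainIndex_const one_ne_zero]
    exact jainIndex_one_add_single_lt_one hn 0 one_ne_zero

theorem lt_of_mem_segment_of_ne {ι : Type*} {u v w : ι → ℝ} (huv : ∀ k, u k < v k)
    (hw : w ∈ segment ℝ u v) (hwv : w ≠ v) (k : ι) : w k < v k := by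
  obtain ⟨θ, ⟨-, hθ1⟩, rfl⟩ := (segment_eq_image' ℝ u v).subset hw
  have hθ : θ < 1 := lt_of_le_of_ne hθ1 (by rintro rfl; simp at hwv)
  have hk := huv k
  simp only [Pi.add_apply, Pi.smul_apply, Pi.sub_apply, smul_eq_mul]
  nlinarith

theorem isCompact_segment_s19 {E : Type*} [AddCommGroup E] [Module ℝ E] [TopologicalSpace E]
    [IsTopologicalAddGroup E] [ContinuousSMul ℝ E] (x y : E) : IsCompact (segment ℝ x y) :=
  convexHull_pair (𝕜 := ℝ) x y ▸ (Set.toFinite _).isCompact_convexHull ℝ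

theorem min_le_min_of_mem_segment {u v w : Fin 2 → ℝ} (huv : u ≤ v) (hw : w ∈ segment ℝ u v) :
    min (w 0) (w 1) ≤ min (v 0) (v 1) :=
  have hwv : w ≤ v := (segment_subset_Icc huv hw).2
  min_le_min (hwv 0) (hwv 1)

theorem eq_of_mem_segment_of_min_eq {u v w : Fin 2 → ℝ} (huv : ∀ k, u k < v k)
    (hw : w ∈ segment ℝ u v) (hmin : min (w 0) (w 1) = min (v 0) (v 1)) : w = v := by
  by_contra hwv
  have hlt := lt_of_mem_segment_of_ne huv hw hwv
  exact hmin.not_lt (lt_min (min_lt_of_left_lt (hlt 0)) (min_lt_of_right_lt (hlt 1)))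

/-- The Jain index `J(w) = (Σₖ wₖ)² / (n·Σₖ wₖ²)` is not monotone: for `n ≥ 2` there are
`u ⪯ v` in `ℝ₊ⁿ` with `J(u) > J(v)`. Consequently there is a nonempty compact convex
`U ⊆ ℝ₊²` whose max-min fair allocation `v` (the unique maximizer of the minimum
coordinate over `U`) has a sub-optimal Jain index: some `u ∈ U` has `J(u) > J(v)`. -/
theorem jain_not_monotone_and_maxmin_suboptimal (n : ℕ) (hn : 2 ≤ n) :
    (∃ u v : Fin n → ℝ, (∀ k, 0 ≤ u k) ∧ (∀ k, 0 ≤ v k) ∧ (∀ k, u k ≤ v k) ∧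
      (∑ k, v k) ^ 2 / ((n : ℝ) * ∑ k, (v k) ^ 2) <
        (∑ k, u k) ^ 2 / ((n : ℝ) * ∑ k, (u k) ^ 2)) ∧
    (∃ (U : Set (Fin 2 → ℝ)) (v u : Fin 2 → ℝ),
      U.Nonempty ∧ IsCompact U ∧ Convex ℝ U ∧ U ⊆ {w | ∀ k, 0 ≤ w k} ∧
      v ∈ U ∧ u ∈ U ∧
      (∀ w ∈ U, min (w 0) (w 1) ≤ min (v 0) (v 1)) ∧
      (∀ w ∈ U, min (w 0) (w 1) = min (v 0) (v 1) → w = v) ∧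
      (∑ k, v k) ^ 2 / (2 * ∑ k, (v k) ^ 2) <
        (∑ k, u k) ^ 2 / (2 * ∑ k, (u k) ^ 2)) := by
  refine ⟨?_, ?_⟩
  · obtain ⟨u, v, hu, huv, hJ⟩ := jainIndex_not_monotone hn
    exact ⟨u, v, hu, hu.trans huv, huv, hJ⟩
  · set u : Fin 2 → ℝ := fun _ => 1 / 2
    set v : Fin 2 → ℝ := 1 + Pi.single 0 1
    have hv : 0 ≤ v := add_nonneg zero_le_one (Pi.single_nonneg.2 zero_le_one)
    have huv : ∀ k, u k < v k := by
      intro k; fin_cases k <;> norm_num [u, v]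
    have hJ : jainIndex v < jainIndex u := by
      rw [jainIndex_const (by norm_num)]
      exact jainIndex_one_add_single_lt_one le_rfl 0 one_ne_zero
    refine ⟨segment ℝ u v, v, u, ⟨u, left_mem_segment ℝ u v⟩, isCompact_segment_s19 u v,
      convex_segment u v, (convex_Ici 0).segment_subset (fun _ => by norm_num [u]) hv,
      right_mem_segment ℝ u v, left_mem_segment ℝ u v,
      fun w hw => min_le_min_of_mem_segment (fun k => (huv k).le) hw,
      fun w hw => eq_of_mem_segment_of_min_eq huv hw, ?_⟩
    simpa [jainIndex] using hJ
end
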